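/- arXiv:2403.11730 — 2 statements merged into one kernel-verified Lean document; each statement's English description precedes it below -/
import Mathlib

section
/- Let p ≥ 1, h ∈ ℝ, and let (A_k)_{k≥0} and (Â_k)_{k≥0} be sequences in ℝ^{p×p} and (Q_k)_{k≥0} a sequence of real p×p orthogonal matrices such that Â_k = A_{k−1} + h·Q_{k−1}·(A_{k−1} − Â_{k−1})·Q_{k−1}ᵀ for all k ≥ 1. Then for every k ≥ 1: ‖Â_k − A_k‖₂ ≤ Σ_{l=0}^{k−1} |h|^l·‖A_{k−l} − A_{k−1−l}‖₂ + |h|^k·‖Â₀ − A₀‖₂. -/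
open Matrix

/-- Spectral norm: operator norm induced by the Euclidean vector norm. -/
noncomputable def specNorm {m n : Type*} [Fintype m] [Fintype n] [DecidableEq n]
    (M : Matrix m n ℝ) : ℝ :=
  ‖LinearMap.toContinuousLinearMap (Matrix.toEuclideanLin M)‖

/-! Each step of the recursion gives `‖Âₖ₊₁ - Aₖ₊₁‖ ≤ ‖Aₖ₊₁ - Aₖ‖ + |h| ‖Âₖ - Aₖ‖`, by the
triangle inequality and because conjugation by an orthogonal matrix preserves the spectral norm.
Unrolling this scalar inequality, a discrete Grönwall argument, gives the bound. -/

theorem le_sum_pow_mul_add_pow_mul_of_le_add_mul {e d : ℕ → ℝ} {c : ℝ} (hc : 0 ≤ c)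
    (he : ∀ k, e (k + 1) ≤ d (k + 1) + c * e k) (k : ℕ) :
    e k ≤ ∑ l ∈ Finset.range k, c ^ l * d (k - l) + c ^ k * e 0 := by
  induction k with
  | zero => simp
  | succ k ih =>
    calc e (k + 1) ≤ d (k + 1) + c * e k := he k
      _ ≤ d (k + 1) + c * (∑ l ∈ Finset.range k, c ^ l * d (k - l) + c ^ k * e 0) := by
        gcongr
      _ = ∑ l ∈ Finset.range (k + 1), c ^ l * d (k + 1 - l) + c ^ (k + 1) * e 0 := by
        rw [Finset.sum_range_succ', mul_add, Finset.mul_sum]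
        simp only [Nat.add_sub_add_right, pow_succ', mul_assoc, Nat.sub_zero, pow_zero, one_mul]
        ring

section L2OpNorm

open scoped Matrix.Norms.L2Operator

theorem specNorm_eq_l2_opNorm {m n : Type*} [Fintype m] [Fintype n] [DecidableEq n]
    (M : Matrix m n ℝ) : specNorm M = ‖M‖ := by
  rw [Matrix.l2_opNorm_def]; rfl

theorem l2_opNorm_orthogonal_conj {n : Type*} [Fintype n] [DecidableEq n] {Q : Matrix n n ℝ}
    (hQ : Qᵀ * Q = 1) (M : Matrix n n ℝ) : ‖Q * M * Qᵀ‖ = ‖M‖ := by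
  have hQ' : Q ∈ unitaryGroup n ℝ := mem_unitaryGroup_iff'.mpr hQ
  rw [CStarRing.norm_mul_mem_unitary _ (transpose_mem_unitaryGroup_iff.mpr hQ'),
    CStarRing.norm_mem_unitary_mul _ hQ']

theorem l2_opNorm_accelerated_step_le {n : Type*} [Fintype n] [DecidableEq n] (h : ℝ)
    {A A' Ahat Ahat' Q : Matrix n n ℝ} (hQ : Qᵀ * Q = 1)
    (hstep : Ahat' = A + h • (Q * (A - Ahat) * Qᵀ)) :
    ‖Ahat' - A'‖ ≤ ‖A' - A‖ + |h| * ‖Ahat - A‖ := by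
  calc ‖Ahat' - A'‖ = ‖(A - A') + h • (Q * (A - Ahat) * Qᵀ)‖ := by rw [hstep]; abel_nf
    _ ≤ ‖A - A'‖ + ‖h • (Q * (A - Ahat) * Qᵀ)‖ := norm_add_le _ _
    _ = ‖A' - A‖ + |h| * ‖Ahat - A‖ := by
      rw [norm_smul, l2_opNorm_orthogonal_conj hQ, Real.norm_eq_abs, norm_sub_rev A,
        norm_sub_rev A]

end L2OpNorm

theorem accelerated_forward_recursion_bound_general (p : ℕ) (h : ℝ)
    (A Ahat Q : ℕ → Matrix (Fin p) (Fin p) ℝ)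
    (hQ : ∀ k, (Q k)ᵀ * Q k = 1)
    (hrec : ∀ k, Ahat (k + 1) = A k + h • (Q k * (A k - Ahat k) * (Q k)ᵀ)) :
    ∀ k, 1 ≤ k →
      specNorm (Ahat k - A k) ≤
        (∑ l ∈ Finset.range k, |h| ^ l * specNorm (A (k - l) - A (k - 1 - l))) +
          |h| ^ k * specNorm (Ahat 0 - A 0) := by
  intro k _
  have hstep (j : ℕ) : specNorm (Ahat (j + 1) - A (j + 1)) ≤
      specNorm (A (j + 1) - A (j + 1 - 1)) + |h| * specNorm (Ahat j - A j) := by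
    simpa only [specNorm_eq_l2_opNorm, Nat.add_sub_cancel] using
      l2_opNorm_accelerated_step_le h (hQ j) (hrec j)
  convert le_sum_pow_mul_add_pow_mul_of_le_add_mul (e := fun j ↦ specNorm (Ahat j - A j))
    (d := fun j ↦ specNorm (A j - A (j - 1))) (abs_nonneg h) hstep k using 4 with l
  rw [Nat.sub_right_comm]

theorem accelerated_forward_recursion_bound (p : ℕ) (hp : 1 ≤ p) (h : ℝ)
    (A Ahat Q : ℕ → Matrix (Fin p) (Fin p) ℝ)
    (hQ : ∀ k, (Q k)ᵀ * Q k = 1)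
    (hrec : ∀ k, Ahat (k + 1) = A k + h • (Q k * (A k - Ahat k) * (Q k)ᵀ)) :
    ∀ k, 1 ≤ k →
      specNorm (Ahat k - A k) ≤
        (∑ l ∈ Finset.range k, |h| ^ l * specNorm (A (k - l) - A (k - 1 - l))) +
          |h| ^ k * specNorm (Ahat 0 - A 0) :=
  accelerated_forward_recursion_bound_general p h A Ahat Q hQ hrec
end

section
/- Let p ≥ 1, h ∈ ℝ, and let (A_k)_{k≥0} and (Â_k)_{k≥0} be sequences in ℝ^{p×p} and (Q_k)_{k≥0} a sequence of real p×p orthogonal matrices such that Â_k = A_{k−1} + h·Q_{k−1}·(A_{k−1} − Â_{k−1})·Q_{k−1}ᵀ for all k ≥ 1. Let c̄ ≥ 0 satisfy ‖A_{j−1} − A_j‖₂ ≤ c̄·‖A_j − A_{j+1}‖₂ for all j ≥ 1 and ‖Â₀ − A₀‖₂ ≤ c̄·‖A₀ − A₁‖₂, and assume c̄·|h| < 1. Then for every k ≥ 1: ‖Â_{k+1} − Â_k‖₂ ≤ ((1+|h|)·c̄/(1 − c̄·|h|))·‖A_{k+1} − A_k‖₂, i.e., the accelerated forward iteration satisfies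 the forward-convergence condition with constant c = (1+|h|)·c̄/(1 − c̄·|h|). -/
open Matrix

section aux
open scoped Matrix.Norms.L2Operator
variable {p : ℕ}

lemma specNorm_eq (M : Matrix (Fin p) (Fin p) ℝ) : specNorm M = ‖M‖ := rfl

lemma specNorm_nonneg (M : Matrix (Fin p) (Fin p) ℝ) : 0 ≤ specNorm M :=
  norm_nonneg M

lemma specNorm_neg (M : Matrix (Fin p) (Fin p) ℝ) : specNorm (-M) = specNorm M := by
  simp [specNorm_eq]

lemma specNorm_add_le (M N : Matrix (Fin p) (Fin p) ℝ) :
    specNorm (M + N) ≤ specNorm M + specNorm N := norm_add_le M N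

lemma specNorm_smul (a : ℝ) (M : Matrix (Fin p) (Fin p) ℝ) :
    specNorm (a • M) = |a| * specNorm M := by
  simp [specNorm_eq, norm_smul]

lemma norm_orth (hp : 1 ≤ p) {Q : Matrix (Fin p) (Fin p) ℝ} (hQ : Qᵀ * Q = 1) : ‖Q‖ = 1 := by
  have : Nonempty (Fin p) := ⟨⟨0, hp⟩⟩
  have h1 : ‖Qᵀ * Q‖ = ‖Q‖ * ‖Q‖ := by
    have e : Qᵀ.map ⇑(starRingEnd ℝ) = Qᵀ := by ext; simp
    simpa [Matrix.star_eq_conjTranspose, Matrix.conjTranspose, e] using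
      CStarRing.norm_star_mul_self (x := Q)
  rw [hQ, norm_one] at h1
  nlinarith [norm_nonneg Q]

lemma specNorm_conj (hp : 1 ≤ p) {Q : Matrix (Fin p) (Fin p) ℝ} (hQ : Qᵀ * Q = 1)
    (M : Matrix (Fin p) (Fin p) ℝ) : specNorm (Q * M * Qᵀ) = specNorm M := by
  have hQ' : Q * Qᵀ = 1 := mul_eq_one_comm.mp hQ
  have hT : Qᵀᵀ * Qᵀ = 1 := by simpa using hQ'
  have n1 : ‖Q‖ = 1 := norm_orth hp hQ
  have n2 : ‖Qᵀ‖ = 1 := norm_orth hp hT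
  simp only [specNorm_eq]
  apply le_antisymm
  · calc ‖Q * M * Qᵀ‖ ≤ ‖Q * M‖ * ‖Qᵀ‖ := norm_mul_le _ _
    _ ≤ ‖Q‖ * ‖M‖ * ‖Qᵀ‖ := by
        have := norm_mul_le Q M
        nlinarith [norm_nonneg (Q*M), norm_nonneg Qᵀ]
    _ = ‖M‖ := by rw [n1, n2]; ring
  · have hM : M = Qᵀ * (Q * M * Qᵀ) * Q := by
      rw [show Qᵀ * (Q * M * Qᵀ) * Q = (Qᵀ * Q) * M * (Qᵀ * Q) by noncomm_ring, hQ]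
      simp
    calc ‖M‖ = ‖Qᵀ * (Q * M * Qᵀ) * Q‖ := by rw [← hM]
    _ ≤ ‖Qᵀ * (Q * M * Qᵀ)‖ * ‖Q‖ := norm_mul_le _ _
    _ ≤ ‖Qᵀ‖ * ‖Q * M * Qᵀ‖ * ‖Q‖ := by
        have := norm_mul_le Qᵀ (Q * M * Qᵀ)
        nlinarith [norm_nonneg (Qᵀ * (Q * M * Qᵀ)), norm_nonneg Q]
    _ = ‖Q * M * Qᵀ‖ := by rw [n1, n2]; ring

end aux

theorem accelerated_forward_convergence_condition (p : ℕ) (hp : 1 ≤ p) (h : ℝ)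
    (A Ahat Q : ℕ → Matrix (Fin p) (Fin p) ℝ)
    (hQ : ∀ k, (Q k)ᵀ * Q k = 1)
    (hrec : ∀ k, Ahat (k + 1) = A k + h • (Q k * (A k - Ahat k) * (Q k)ᵀ))
    (c : ℝ) (hc : 0 ≤ c)
    (hrev : ∀ j, 1 ≤ j → specNorm (A (j - 1) - A j) ≤ c * specNorm (A j - A (j + 1)))
    (h0 : specNorm (Ahat 0 - A 0) ≤ c * specNorm (A 0 - A 1))
    (hch : c * |h| < 1) :
    ∀ k, 1 ≤ k →
      specNorm (Ahat (k + 1) - Ahat k) ≤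
        ((1 + |h|) * c / (1 - c * |h|)) * specNorm (A (k + 1) - A k) := by
  have h1 : 0 < 1 - c * |h| := by linarith
  set K : ℝ := c / (1 - c * |h|) with hKdef
  have hKc : K * (1 - c * |h|) = c := div_mul_cancel₀ c (ne_of_gt h1)
  have hK0 : 0 ≤ K := div_nonneg hc (le_of_lt h1)
  have habs : 0 ≤ |h| := abs_nonneg h
  have hd : ∀ k : ℕ, specNorm (A k - A (k + 1)) ≤ c * specNorm (A (k + 1) - A (k + 2)) := by
    intro k; exact hrev (k + 1) (by omega)
  have hE : ∀ k, specNorm (A k - Ahat k) ≤ K * specNorm (A k - A (k + 1)) := by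
    intro k
    induction k with
    | zero =>
      have e : specNorm (A 0 - Ahat 0) = specNorm (Ahat 0 - A 0) := by
        rw [← neg_sub, specNorm_neg]
      rw [e]
      have hn := specNorm_nonneg (A 0 - A 1)
      have hcK : c ≤ K := by nlinarith [mul_nonneg hK0 (mul_nonneg hc habs)]
      calc specNorm (Ahat 0 - A 0) ≤ c * specNorm (A 0 - A 1) := h0
        _ ≤ K * specNorm (A 0 - A 1) := by nlinarith
    | succ k ih =>
      have key : A (k + 1) - Ahat (k + 1) =
          (A (k + 1) - A k) + (-h) • (Q k * (A k - Ahat k) * (Q k)ᵀ) := by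
        rw [hrec k]; module
      have t1 : specNorm (A (k + 1) - Ahat (k + 1)) ≤
          specNorm (A (k + 1) - A k) +
            specNorm ((-h) • (Q k * (A k - Ahat k) * (Q k)ᵀ)) := by
        rw [key]; exact specNorm_add_le _ _
      have t2 : specNorm ((-h) • (Q k * (A k - Ahat k) * (Q k)ᵀ)) =
          |h| * specNorm (A k - Ahat k) := by
        rw [specNorm_smul, abs_neg, specNorm_conj hp (hQ k)]
      have t3 : specNorm (A (k + 1) - A k) = specNorm (A k - A (k + 1)) := by
        rw [← neg_sub, specNorm_neg]
      have hdk := hd k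
      have hn1 := specNorm_nonneg (A k - A (k + 1))
      have hn2 := specNorm_nonneg (A (k + 1) - A (k + 2))
      rw [t2, t3] at t1
      nlinarith [mul_le_mul_of_nonneg_left ih habs,
        mul_le_mul_of_nonneg_left hdk (mul_nonneg habs hK0),
        mul_nonneg habs (specNorm_nonneg (A k - Ahat k))]
  intro k hk
  obtain ⟨j, rfl⟩ : ∃ j, k = j + 1 := ⟨k - 1, by omega⟩
  have key : Ahat (j + 1 + 1) - Ahat (j + 1) =
      ((A (j + 1) - A j) + h • (Q (j + 1) * (A (j + 1) - Ahat (j + 1)) * (Q (j + 1))ᵀ)) +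
        (-h) • (Q j * (A j - Ahat j) * (Q j)ᵀ) := by
    rw [hrec (j + 1), hrec j]; module
  have t1 : specNorm (Ahat (j + 1 + 1) - Ahat (j + 1)) ≤
      (specNorm (A (j + 1) - A j) +
        specNorm (h • (Q (j + 1) * (A (j + 1) - Ahat (j + 1)) * (Q (j + 1))ᵀ))) +
        specNorm ((-h) • (Q j * (A j - Ahat j) * (Q j)ᵀ)) := by
    rw [key]
    exact le_trans (specNorm_add_le _ _) (by gcongr; exact specNorm_add_le _ _)
  rw [specNorm_smul, specNorm_conj hp (hQ (j + 1)), specNorm_smul, abs_neg,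
    specNorm_conj hp (hQ j)] at t1
  have t3 : specNorm (A (j + 1) - A j) = specNorm (A j - A (j + 1)) := by
    rw [← neg_sub, specNorm_neg]
  have t4 : specNorm (A (j + 1 + 1) - A (j + 1)) = specNorm (A (j + 1) - A (j + 1 + 1)) := by
    rw [← neg_sub, specNorm_neg]
  rw [t3] at t1
  rw [t4]
  have hE1 := hE j
  have hE2 := hE (j + 1)
  have hdj := hd j
  have hn1 := specNorm_nonneg (A j - A (j + 1))
  have hn2 := specNorm_nonneg (A (j + 1) - A (j + 1 + 1))
  have hn3 := specNorm_nonneg (A j - Ahat j)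
  have hn4 := specNorm_nonneg (A (j + 1) - Ahat (j + 1))
  have hgoal : (1 + |h|) * c / (1 - c * |h|) = (1 + |h|) * K := by
    rw [hKdef]; ring
  rw [hgoal]
  nlinarith [mul_nonneg habs hn3, mul_nonneg habs hn4, mul_nonneg hK0 hn2,
    mul_le_mul_of_nonneg_left hdj habs, mul_le_mul_of_nonneg_left hE1 habs,
    mul_le_mul_of_nonneg_left hE2 habs, mul_le_mul_of_nonneg_left hdj hK0]
end
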